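/- (Lemma 1, inequality (5.1).) For any policy π, any t ≥ 1, any measurable set A, and any x > 0, P( |θ̂_π(t) − θ| > x and A ) ≤ 2 [ E exp( −x² T_π(t) / (2σ²) ) · I{ |θ̂_π(t) − θ| > x, A } ]^{1/2}. -/

import Mathlib

open MeasureTheory ProbabilityTheory

noncomputable section

namespace OneArmedBandit

/-- The model of Woodroofe's one-armed bandit problem with covariates: the covariates
`X_t` are i.i.d. with common law `PX`, the noise variables `ε_t` are i.i.d. centered
Gaussian with variance `σ²`, and all these random variables are mutually independent
under the probability measure `P`. -/
structure Model (Ω : Type) [MeasurableSpace Ω] where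
  P : Measure Ω
  isProb : IsProbabilityMeasure P
  X : ℕ → Ω → ℝ
  eps : ℕ → Ω → ℝ
  σ : ℝ
  σ_pos : 0 < σ
  PX : Measure ℝ
  PX_prob : IsProbabilityMeasure PX
  meas_X : ∀ t, Measurable (X t)
  meas_eps : ∀ t, Measurable (eps t)
  law_X : ∀ t, P.map (X t) = PX
  law_eps : ∀ t, P.map (eps t) = gaussianReal 0 ⟨σ ^ 2, sq_nonneg σ⟩
  indep : iIndepFun (Sum.elim X eps) P

variable {Ω : Type} [MeasurableSpace Ω]

/-- The reward of arm 1 at time `t`: `Y_t = X_t − θ + ε_t` (arm 0 yields reward 0). -/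
def Model.Y (M : Model Ω) (θ : ℝ) (t : ℕ) (ω : Ω) : ℝ := M.X t ω - θ + M.eps t ω

/-- `T_π(t) = ∑_{s=1}^t π_s`, the number of pulls of arm 1 up to time `t`. -/
def Tpulls (π : ℕ → Ω → ℝ) (t : ℕ) (ω : Ω) : ℝ := ∑ s ∈ Finset.Icc 1 t, π s ω

/-- The estimator `θ̂_π(t) = T_π(t)⁻¹ ∑_{s=1}^t (X_s − Y_s) π_s`. -/
def thetaHat (M : Model Ω) (θ : ℝ) (π : ℕ → Ω → ℝ) (t : ℕ) (ω : Ω) : ℝ :=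
  (Tpulls π t ω)⁻¹ * ∑ s ∈ Finset.Icc 1 t, (M.X s ω - M.Y θ s ω) * π s ω

/-- `F⁺_t = σ(X_1,…,X_t,X_{t+1}; π_1,…,π_t; π_1Y_1,…,π_tY_t)`. -/
def Fplus (M : Model Ω) (θ : ℝ) (π : ℕ → Ω → ℝ) (t : ℕ) : MeasurableSpace Ω :=
  (⨆ s ∈ Finset.Icc 1 (t + 1), MeasurableSpace.comap (M.X s) inferInstance) ⊔
  (⨆ s ∈ Finset.Icc 1 t, MeasurableSpace.comap (π s) inferInstance) ⊔
  (⨆ s ∈ Finset.Icc 1 t, MeasurableSpace.comap (fun ω => π s ω * M.Y θ s ω) inferInstance)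

/-- `F_t = σ(X_1,…,X_t; π_1,…,π_t; π_1Y_1,…,π_tY_t)`. -/
def Ffilt (M : Model Ω) (θ : ℝ) (π : ℕ → Ω → ℝ) (t : ℕ) : MeasurableSpace Ω :=
  (⨆ s ∈ Finset.Icc 1 t, MeasurableSpace.comap (M.X s) inferInstance) ⊔
  (⨆ s ∈ Finset.Icc 1 t, MeasurableSpace.comap (π s) inferInstance) ⊔
  (⨆ s ∈ Finset.Icc 1 t, MeasurableSpace.comap (fun ω => π s ω * M.Y θ s ω) inferInstance)

/-- A policy: a `{0,1}`-valued sequence of random variables, `π_t` being measurable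
with respect to `F⁺_{t−1}`. -/
structure IsPolicy (M : Model Ω) (θ : ℝ) (π : ℕ → Ω → ℝ) : Prop where
  vals : ∀ t ω, π t ω = 0 ∨ π t ω = 1
  adapted : ∀ t, 1 ≤ t → Measurable[Fplus M θ π (t - 1)] (π t)

/-- The oracle policy `π*_t = I{X_t ≥ θ}`. -/
def oracle (M : Model Ω) (θ : ℝ) (t : ℕ) (ω : Ω) : ℝ := if θ ≤ M.X t ω then 1 else 0

/-- The inferior sampling rate `S_n(π, π*) = ∑_{t=1}^n P(π_t ≠ π*_t)`. -/
def Srate (M : Model Ω) (θ : ℝ) (π : ℕ → Ω → ℝ) (n : ℕ) : ℝ :=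
  ∑ t ∈ Finset.Icc 1 n, (M.P {ω | π t ω ≠ oracle M θ t ω}).toReal

/-- The regret `R_n(π, π*) = E ∑_{t=1}^n |X_t − θ| I{π_t ≠ π*_t}`. -/
def Regret (M : Model Ω) (θ : ℝ) (π : ℕ → Ω → ℝ) (n : ℕ) : ℝ :=
  ∫ ω, (∑ t ∈ Finset.Icc 1 n,
    |M.X t ω - θ| * (if π t ω ≠ oracle M θ t ω then 1 else 0)) ∂M.P

/-- `(θ, P_X)` belongs to the class `𝒫_α` with constants `C_*, x₀, p`. -/
structure InClass (PX : Measure ℝ) (θ Cstar x0 p α : ℝ) : Prop where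
  margin : ∀ x ∈ Set.Ioc (0 : ℝ) x0, (PX (Set.Icc (θ - x) (θ + x))).toReal ≤ Cstar * x ^ α
  p_le : p ≤ (PX (Set.Ici θ)).toReal
  lt_one : (PX (Set.Ici θ)).toReal < 1

/-- `(θ, P_X)` belongs to the class `𝒫'_α`: additionally `∫ |x − θ| P_X(dx) ≤ μ`. -/
structure InClass' (PX : Measure ℝ) (θ Cstar x0 p α μ : ℝ)
    extends InClass PX θ Cstar x0 p α : Prop where
  moment : ∫ x, |x - θ| ∂PX ≤ μ

end OneArmedBandit

/-!
With `S = ∑ ε_s π_s`, `T = T_π(t)`, `λ = x/σ²` and `c = x²/(2σ²) = σ²λ²/2`, the process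
`exp(±λ S − c T)` is a mean-one martingale: `π_{t+1}` is known before `ε_{t+1}` is drawn, and
`π_{t+1} ∈ {0,1}`. On the event `|θ̂ − θ| > x` we have `x T ≤ |S|`, hence
`exp(c T) ≤ exp(λ S − c T) + exp(-λ S − c T)`, so `E[exp(c T); B] ≤ 2`. Cauchy–Schwarz applied to
`1_B = (1_B e^{-cT/2}) (1_B e^{cT/2})` gives `P(B) ≤ √2 · (E[e^{-cT}; B])^{1/2}`.
-/

open MeasureTheory ProbabilityTheory
open scoped NNReal

section

open Real

variable {Ω : Type*} {m mΩ : MeasurableSpace Ω} {μ : Measure Ω}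

lemma exp_le_exp_add_exp_neg {a u : ℝ} (h : a ≤ |u|) : exp a ≤ exp u + exp (-u) := by
  rcases abs_cases u with ⟨hu, -⟩ | ⟨hu, -⟩ <;> rw [hu] at h
  · exact (exp_le_exp.mpr h).trans (le_add_of_nonneg_right (exp_pos _).le)
  · exact (exp_le_exp.mpr h).trans (le_add_of_nonneg_left (exp_pos _).le)

lemma measureReal_le_sqrt_mul_sqrt {B : Set Ω} (hB : MeasurableSet B) {Z : Ω → ℝ}
    (hZ : Measurable Z)
    (h₁ : Integrable (fun ω => exp (-Z ω) * B.indicator (fun _ => (1 : ℝ)) ω) μ)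
    (h₂ : Integrable (fun ω => exp (Z ω) * B.indicator (fun _ => (1 : ℝ)) ω) μ) :
    μ.real B ≤ √(∫ ω, exp (-Z ω) * B.indicator (fun _ => (1 : ℝ)) ω ∂μ) *
      √(∫ ω, exp (Z ω) * B.indicator (fun _ => (1 : ℝ)) ω ∂μ) := by
  set f : Ω → ℝ := fun ω => exp (-Z ω / 2) * B.indicator (fun _ => (1 : ℝ)) ω
  set g : Ω → ℝ := fun ω => exp (Z ω / 2) * B.indicator (fun _ => (1 : ℝ)) ω
  have hsq : ∀ (w : ℝ) (ω : Ω), (exp (w / 2) * B.indicator (fun _ => (1 : ℝ)) ω) ^ (2 : ℝ) =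
      exp w * B.indicator (fun _ => (1 : ℝ)) ω := by
    intro w ω
    rw [rpow_two, mul_pow, ← exp_nat_mul]
    by_cases hω : ω ∈ B <;> simp [hω]
    ring_nf
  have hf_sq : (fun ω => f ω ^ (2 : ℝ)) = fun ω => exp (-Z ω) * B.indicator (fun _ => 1) ω :=
    funext fun ω => hsq (-Z ω) ω
  have hg_sq : (fun ω => g ω ^ (2 : ℝ)) = fun ω => exp (Z ω) * B.indicator (fun _ => 1) ω :=
    funext fun ω => hsq (Z ω) ω
  have hfg : (fun ω => f ω * g ω) = B.indicator 1 := by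
    funext ω
    by_cases hω : ω ∈ B <;> simp [f, g, hω, ← exp_add]
    ring_nf
  have hmemLp : ∀ {h : Ω → ℝ}, Measurable h →
      Integrable (fun ω => h ω ^ (2 : ℝ)) μ → MemLp h (ENNReal.ofReal 2) μ := by
    intro h hh hint
    rw [ENNReal.ofReal_ofNat, memLp_two_iff_integrable_sq hh.aestronglyMeasurable]
    simpa [rpow_two] using hint
  have hnonneg : ∀ (w : ℝ) (ω : Ω), 0 ≤ exp w * B.indicator (fun _ => (1 : ℝ)) ω :=
    fun w ω => mul_nonneg (exp_pos w).le (B.indicator_nonneg (fun _ _ => zero_le_one) ω)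
  have holder := integral_mul_le_Lp_mul_Lq_of_nonneg (μ := μ) Real.HolderConjugate.two_two
    (ae_of_all _ fun ω => hnonneg _ ω) (ae_of_all _ fun ω => hnonneg _ ω)
    (hmemLp (by fun_prop) (hf_sq ▸ h₁)) (hmemLp (by fun_prop) (hg_sq ▸ h₂))
  rwa [hfg, integral_indicator_one hB, hf_sq, hg_sq, ← sqrt_eq_rpow, ← sqrt_eq_rpow] at holder

lemma integrable_exp_mul_of_map_eq_gaussianReal [NeZero μ] {ε : Ω → ℝ} {v : ℝ≥0}
    (hε : μ.map ε = gaussianReal 0 v) (l : ℝ) : Integrable (fun ω => exp (l * ε ω)) μ := by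
  rw [← mgf_pos_iff, mgf_gaussianReal hε]
  exact exp_pos _

/-- Since `p ∈ {0,1}`, `exp (p u) = 1 + p (exp u - 1)`; the factor `exp u` is independent of
`W p` and has mean one by the Gaussian moment generating function. -/
lemma integral_mul_exp_gaussian_of_indep [NeZero μ] {W p ε : Ω → ℝ} {v : ℝ≥0} (hm : m ≤ mΩ)
    (hWm : Measurable[m] W) (hW : Integrable W μ) (hpm : Measurable[m] p)
    (hp : ∀ ω, p ω = 0 ∨ p ω = 1) (hεlaw : μ.map ε = gaussianReal 0 v)
    (hind : Indep (MeasurableSpace.comap ε inferInstance) m μ) (l : ℝ) :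
    Integrable (fun ω => W ω * exp (p ω * (l * ε ω - v * l ^ 2 / 2))) μ ∧
      ∫ ω, W ω * exp (p ω * (l * ε ω - v * l ^ 2 / 2)) ∂μ = ∫ ω, W ω ∂μ := by
  set g : Ω → ℝ := fun ω => exp (l * ε ω - v * l ^ 2 / 2)
  have hg_eq : g = fun ω => exp (-(v * l ^ 2 / 2)) * exp (l * ε ω) := by
    funext ω
    rw [← exp_add, neg_add_eq_sub]
  have hg : Integrable g μ := by
    rw [hg_eq]
    exact (integrable_exp_mul_of_map_eq_gaussianReal hεlaw l).const_mul _
  have hg_int : ∫ ω, g ω ∂μ = 1 := by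
    rw [hg_eq, integral_const_mul, ← mgf, mgf_gaussianReal hεlaw, ← exp_add]
    simp [mul_comm]
  have hWp : Integrable (fun ω => W ω * p ω) μ := by
    refine hW.mul_bdd (c := 1) (hpm.mono hm le_rfl).aestronglyMeasurable (ae_of_all _ fun ω => ?_)
    rcases hp ω with h | h <;> simp [h]
  have hindep : IndepFun (fun ω => W ω * p ω) g μ := by
    have : IndepFun (fun ω => W ω * p ω) ε μ := by
      rw [IndepFun_iff_Indep]
      exact indep_of_indep_of_le_left hind.symm (measurable_iff_comap_le.mp (hWm.mul hpm))
    exact this.comp (φ := id) (ψ := fun y => exp (l * y - v * l ^ 2 / 2)) measurable_id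
      (by fun_prop)
  have hsplit : (fun ω => W ω * exp (p ω * (l * ε ω - v * l ^ 2 / 2))) =
      fun ω => W ω + (W ω * p ω * g ω - W ω * p ω) := by
    funext ω
    rcases hp ω with h | h <;> simp [h, g]
  have hWpg : Integrable (fun ω => W ω * p ω * g ω) μ := hindep.integrable_mul hWp hg
  have hrest : Integrable (fun ω => W ω * p ω * g ω - W ω * p ω) μ := hWpg.sub hWp
  rw [hsplit]
  refine ⟨hW.add hrest, ?_⟩
  rw [integral_add hW hrest, integral_sub hWpg hWp,
    hindep.integral_fun_mul_eq_mul_integral hWp.aestronglyMeasurable hg.aestronglyMeasurable,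
    hg_int, mul_one, sub_self, add_zero]

end

namespace OneArmedBandit

open Real (exp)

variable {Ω : Type} [MeasurableSpace Ω] {M : Model Ω} {θ : ℝ} {π : ℕ → Ω → ℝ}

/-- `G_t = σ(X_1,…,X_{t+1}; ε_1,…,ε_t)`: it contains `F⁺_t` and is independent of `ε_{t+1}`. -/
def Gfilt (M : Model Ω) (t : ℕ) : MeasurableSpace Ω :=
  (⨆ s ∈ Finset.Icc 1 (t + 1), MeasurableSpace.comap (M.X s) inferInstance) ⊔
  (⨆ s ∈ Finset.Icc 1 t, MeasurableSpace.comap (M.eps s) inferInstance)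

namespace Gfilt

variable (M : Model Ω)

lemma le (t : ℕ) : Gfilt M t ≤ ‹MeasurableSpace Ω› :=
  sup_le (iSup₂_le fun s _ => (M.meas_X s).comap_le) (iSup₂_le fun s _ => (M.meas_eps s).comap_le)

lemma mono {t t' : ℕ} (h : t ≤ t') : Gfilt M t ≤ Gfilt M t' := by
  refine sup_le_sup (iSup₂_le fun s hs => ?_) (iSup₂_le fun s hs => ?_) <;>
  · rw [Finset.mem_Icc] at hs
    exact le_iSup₂_of_le s (Finset.mem_Icc.mpr ⟨hs.1, by omega⟩) le_rfl

lemma measurable_X {s t : ℕ} (h1 : 1 ≤ s) (h2 : s ≤ t + 1) : Measurable[Gfilt M t] (M.X s) :=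
  measurable_iff_comap_le.mpr
    (le_sup_of_le_left (le_iSup₂_of_le s (Finset.mem_Icc.mpr ⟨h1, h2⟩) le_rfl))

lemma measurable_eps {s t : ℕ} (h1 : 1 ≤ s) (h2 : s ≤ t) : Measurable[Gfilt M t] (M.eps s) :=
  measurable_iff_comap_le.mpr
    (le_sup_of_le_right (le_iSup₂_of_le s (Finset.mem_Icc.mpr ⟨h1, h2⟩) le_rfl))

lemma indep_eps_succ (t : ℕ) :
    Indep (MeasurableSpace.comap (M.eps (t + 1)) inferInstance) (Gfilt M t) M.P := by
  have h := indep_biSup_compl (μ := M.P)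
    (s := fun i : ℕ ⊕ ℕ => MeasurableSpace.comap (Sum.elim M.X M.eps i) inferInstance)
    (fun i => i.rec (fun s => (M.meas_X s).comap_le) (fun s => (M.meas_eps s).comap_le))
    M.indep.iIndep {Sum.inr (t + 1)}
  refine indep_of_indep_of_le_right (indep_of_indep_of_le_left h ?_) ?_
  · exact le_iSup₂_of_le (Sum.inr (t + 1)) rfl le_rfl
  · refine sup_le (iSup₂_le fun s _ => ?_) (iSup₂_le fun s hs => ?_)
    · exact le_iSup₂_of_le (Sum.inl s) (by simp) le_rfl
    · rw [Finset.mem_Icc] at hs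
      exact le_iSup₂_of_le (Sum.inr s)
        (by simp only [Set.mem_compl_iff, Set.mem_singleton_iff, Sum.inr.injEq]; omega) le_rfl

end Gfilt

namespace IsPolicy

lemma Fplus_le_Gfilt (hπ : IsPolicy M θ π) (t : ℕ) : Fplus M θ π t ≤ Gfilt M t := by
  induction t using Nat.strong_induction_on with
  | _ t ih =>
    have hπ_le : ∀ s ∈ Finset.Icc 1 t, Measurable[Gfilt M t] (π s) := by
      intro s hs
      rw [Finset.mem_Icc] at hs
      exact (hπ.adapted s hs.1).mono ((ih (s - 1) (by omega)).trans (Gfilt.mono M (by omega)))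
        le_rfl
    refine sup_le (sup_le le_sup_left (iSup₂_le fun s hs => (hπ_le s hs).comap_le))
      (iSup₂_le fun s hs => ?_)
    have hs' := Finset.mem_Icc.mp hs
    exact ((hπ_le s hs).mul (((Gfilt.measurable_X M hs'.1 (by omega)).sub measurable_const).add
      (Gfilt.measurable_eps M hs'.1 hs'.2))).comap_le

lemma measurable_Gfilt (hπ : IsPolicy M θ π) {s t : ℕ} (h1 : 1 ≤ s) (h2 : s ≤ t + 1) :
    Measurable[Gfilt M t] (π s) :=
  (hπ.adapted s h1).mono ((hπ.Fplus_le_Gfilt (s - 1)).trans (Gfilt.mono M (by omega))) le_rfl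

lemma measurable (hπ : IsPolicy M θ π) {s : ℕ} (h1 : 1 ≤ s) : Measurable (π s) :=
  (hπ.measurable_Gfilt h1 (Nat.le_succ s)).mono (Gfilt.le M s) le_rfl

lemma measurable_Tpulls (hπ : IsPolicy M θ π) (t : ℕ) : Measurable (Tpulls π t) :=
  Finset.measurable_sum _ fun _ hs => hπ.measurable (Finset.mem_Icc.mp hs).1

lemma measurable_thetaHat (hπ : IsPolicy M θ π) (t : ℕ) : Measurable (thetaHat M θ π t) :=
  (hπ.measurable_Tpulls t).inv.mul <| Finset.measurable_sum _ fun s hs =>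
    ((M.meas_X s).sub (((M.meas_X s).sub measurable_const).add (M.meas_eps s))).mul
      (hπ.measurable (Finset.mem_Icc.mp hs).1)

lemma Tpulls_nonneg (hπ : IsPolicy M θ π) (t : ℕ) (ω : Ω) : 0 ≤ Tpulls π t ω :=
  Finset.sum_nonneg fun s _ => by rcases hπ.vals s ω with h | h <;> simp [h]

end IsPolicy

def noiseSum (M : Model Ω) (π : ℕ → Ω → ℝ) (t : ℕ) (ω : Ω) : ℝ :=
  ∑ s ∈ Finset.Icc 1 t, M.eps s ω * π s ω

lemma thetaHat_sub_eq {t : ℕ} {ω : Ω} (hT : Tpulls π t ω ≠ 0) :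
    thetaHat M θ π t ω - θ = -(noiseSum M π t ω / Tpulls π t ω) := by
  have hsum : ∑ s ∈ Finset.Icc 1 t, (M.X s ω - M.Y θ s ω) * π s ω =
      θ * Tpulls π t ω - noiseSum M π t ω := by
    simp only [Model.Y, Tpulls, noiseSum, Finset.mul_sum, ← Finset.sum_sub_distrib]
    exact Finset.sum_congr rfl fun s _ => by ring
  rw [thetaHat, hsum]
  field_simp
  ring

lemma mul_Tpulls_le_abs_noiseSum {t : ℕ} {x : ℝ} {ω : Ω} (hx : 0 ≤ x)
    (h : x < |thetaHat M θ π t ω - θ|) : x * Tpulls π t ω ≤ |noiseSum M π t ω| := by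
  by_cases hT : Tpulls π t ω = 0
  · simp [hT]
  rw [thetaHat_sub_eq hT, abs_neg, abs_div, lt_div_iff₀ (abs_pos.mpr hT)] at h
  exact (mul_le_mul_of_nonneg_left (le_abs_self _) hx).trans h.le

lemma IsPolicy.integral_exp_noiseSum (hπ : IsPolicy M θ π) (l : ℝ) (t : ℕ) :
    Integrable (fun ω => exp (l * noiseSum M π t ω - M.σ ^ 2 * l ^ 2 / 2 * Tpulls π t ω)) M.P ∧
      ∫ ω, exp (l * noiseSum M π t ω - M.σ ^ 2 * l ^ 2 / 2 * Tpulls π t ω) ∂M.P = 1 := by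
  have := M.isProb
  induction t with
  | zero => simp [noiseSum, Tpulls]
  | succ t ih =>
    have hπ_meas : ∀ s ∈ Finset.Icc 1 t, Measurable[Gfilt M t] (π s) := fun s hs =>
      hπ.measurable_Gfilt (Finset.mem_Icc.mp hs).1 (by have := (Finset.mem_Icc.mp hs).2; omega)
    have hW : Measurable[Gfilt M t]
        (fun ω => exp (l * noiseSum M π t ω - M.σ ^ 2 * l ^ 2 / 2 * Tpulls π t ω)) := by
      refine Measurable.exp (((Finset.measurable_sum _ fun s hs => ?_).const_mul l).sub
        ((Finset.measurable_sum _ hπ_meas).const_mul _))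
      have hs' := Finset.mem_Icc.mp hs
      exact (Gfilt.measurable_eps M hs'.1 hs'.2).mul (hπ_meas s hs)
    have hstep : (fun ω => exp (l * noiseSum M π (t + 1) ω -
          M.σ ^ 2 * l ^ 2 / 2 * Tpulls π (t + 1) ω)) = fun ω =>
        exp (l * noiseSum M π t ω - M.σ ^ 2 * l ^ 2 / 2 * Tpulls π t ω) *
          exp (π (t + 1) ω * (l * M.eps (t + 1) ω - M.σ ^ 2 * l ^ 2 / 2)) := by
      funext ω
      simp only [← Real.exp_add, noiseSum, Tpulls,
        Finset.sum_Icc_succ_top (show 1 ≤ t + 1 by omega)]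
      ring_nf
    rw [hstep, ← ih.2]
    exact integral_mul_exp_gaussian_of_indep (Gfilt.le M t) hW ih.1
      (hπ.measurable_Gfilt (by omega) le_rfl) (hπ.vals (t + 1)) (M.law_eps (t + 1))
      (Gfilt.indep_eps_succ M t) l

lemma exp_mul_Tpulls_le {t : ℕ} {x : ℝ} (hx : 0 ≤ x) {ω : Ω} (h : x < |thetaHat M θ π t ω - θ|) :
    exp (x ^ 2 / (2 * M.σ ^ 2) * Tpulls π t ω) ≤
      exp ((x / M.σ ^ 2) * noiseSum M π t ω - M.σ ^ 2 * (x / M.σ ^ 2) ^ 2 / 2 * Tpulls π t ω) +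
      exp ((-(x / M.σ ^ 2)) * noiseSum M π t ω -
        M.σ ^ 2 * (-(x / M.σ ^ 2)) ^ 2 / 2 * Tpulls π t ω) := by
  have hσ : 0 < M.σ ^ 2 := pow_pos M.σ_pos 2
  set c := x ^ 2 / (2 * M.σ ^ 2) with hc_def
  have hc : M.σ ^ 2 * (x / M.σ ^ 2) ^ 2 / 2 = c := by rw [hc_def]; field_simp
  have h2c : 2 * c * Tpulls π t ω ≤ |x / M.σ ^ 2 * noiseSum M π t ω| := by
    rw [abs_mul, abs_of_nonneg (div_nonneg hx hσ.le)]
    calc 2 * c * Tpulls π t ω = x / M.σ ^ 2 * (x * Tpulls π t ω) := by rw [hc_def]; field_simp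
      _ ≤ x / M.σ ^ 2 * |noiseSum M π t ω| :=
        mul_le_mul_of_nonneg_left (mul_Tpulls_le_abs_noiseSum hx h) (div_nonneg hx hσ.le)
  calc exp (c * Tpulls π t ω) = exp (2 * c * Tpulls π t ω) * exp (-(c * Tpulls π t ω)) := by
        rw [← Real.exp_add]; ring_nf
    _ ≤ (exp (x / M.σ ^ 2 * noiseSum M π t ω) + exp (-(x / M.σ ^ 2 * noiseSum M π t ω))) *
          exp (-(c * Tpulls π t ω)) :=
        mul_le_mul_of_nonneg_right (exp_le_exp_add_exp_neg h2c) (Real.exp_pos _).le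
    _ = _ := by
        rw [neg_sq, hc, add_mul, ← Real.exp_add, ← Real.exp_add]
        ring_nf

lemma IsPolicy.integral_exp_mul_Tpulls_indicator_le_two (hπ : IsPolicy M θ π) (t : ℕ) {x : ℝ}
    (hx : 0 ≤ x) {B : Set Ω} (hB : MeasurableSet B)
    (hB_sub : B ⊆ {ω | x < |thetaHat M θ π t ω - θ|}) :
    Integrable (fun ω => exp (x ^ 2 / (2 * M.σ ^ 2) * Tpulls π t ω) *
        B.indicator (fun _ => (1 : ℝ)) ω) M.P ∧
      ∫ ω, exp (x ^ 2 / (2 * M.σ ^ 2) * Tpulls π t ω) * B.indicator (fun _ => (1 : ℝ)) ω ∂M.P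
        ≤ 2 := by
  obtain ⟨hint_pos, hone_pos⟩ := hπ.integral_exp_noiseSum (x / M.σ ^ 2) t
  obtain ⟨hint_neg, hone_neg⟩ := hπ.integral_exp_noiseSum (-(x / M.σ ^ 2)) t
  have hle : ∀ ω, exp (x ^ 2 / (2 * M.σ ^ 2) * Tpulls π t ω) * B.indicator (fun _ => (1 : ℝ)) ω ≤
      exp ((x / M.σ ^ 2) * noiseSum M π t ω - M.σ ^ 2 * (x / M.σ ^ 2) ^ 2 / 2 * Tpulls π t ω) +
      exp ((-(x / M.σ ^ 2)) * noiseSum M π t ω -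
        M.σ ^ 2 * (-(x / M.σ ^ 2)) ^ 2 / 2 * Tpulls π t ω) := by
    intro ω
    by_cases hω : ω ∈ B
    · simpa [hω] using exp_mul_Tpulls_le hx (hB_sub hω)
    · simp only [hω, not_false_eq_true, Set.indicator_of_notMem, mul_zero]
      positivity
  have hT := hπ.measurable_Tpulls t
  have hint : Integrable (fun ω => exp (x ^ 2 / (2 * M.σ ^ 2) * Tpulls π t ω) *
      B.indicator (fun _ => (1 : ℝ)) ω) M.P := by
    refine (hint_pos.add hint_neg).mono' (by fun_prop) (ae_of_all _ fun ω => ?_)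
    rw [Real.norm_of_nonneg (mul_nonneg (Real.exp_pos _).le
      (B.indicator_nonneg (fun _ _ => zero_le_one) ω))]
    exact hle ω
  refine ⟨hint, ?_⟩
  calc _ ≤ _ := integral_mono hint (hint_pos.add hint_neg) hle
    _ = 2 := by rw [integral_add' hint_pos hint_neg, hone_pos, hone_neg]; norm_num

theorem lemma1_self_normalized_general (Ω : Type) [MeasurableSpace Ω] (M : Model Ω) (θ : ℝ)
    (π : ℕ → Ω → ℝ) (hπ : IsPolicy M θ π) (t : ℕ)
    (A : Set Ω) (hA : MeasurableSet A) (x : ℝ) (hx : 0 < x) :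
    (M.P ({ω | x < |thetaHat M θ π t ω - θ|} ∩ A)).toReal ≤
      2 * Real.sqrt (∫ ω, Real.exp (-(x ^ 2) * Tpulls π t ω / (2 * M.σ ^ 2)) *
        Set.indicator ({ω | x < |thetaHat M θ π t ω - θ|} ∩ A) (fun _ => (1 : ℝ)) ω
        ∂M.P) := by
  have := M.isProb
  set B := {ω | x < |thetaHat M θ π t ω - θ|} ∩ A
  set c := x ^ 2 / (2 * M.σ ^ 2)
  have hB : MeasurableSet B :=
    (measurableSet_lt measurable_const ((hπ.measurable_thetaHat t).sub_const θ).abs).inter hA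
  have hT := hπ.measurable_Tpulls t
  obtain ⟨hint, hle_two⟩ :=
    hπ.integral_exp_mul_Tpulls_indicator_le_two t hx.le hB Set.inter_subset_left
  have hexp : ∀ ω, exp (-(x ^ 2) * Tpulls π t ω / (2 * M.σ ^ 2)) = exp (-(c * Tpulls π t ω)) :=
    fun ω => by congr 1; ring
  have hint' : Integrable (fun ω => exp (-(c * Tpulls π t ω)) * B.indicator (fun _ => 1) ω) M.P :=
    ((integrable_const 1).indicator hB).bdd_mul (c := 1) (by fun_prop) (ae_of_all _ fun ω => by
      rw [Real.norm_of_nonneg (Real.exp_pos _).le, Real.exp_le_one_iff, neg_nonpos]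
      exact mul_nonneg (by positivity) (hπ.Tpulls_nonneg t ω))
  simp_rw [hexp]
  calc M.P.real B ≤ _ * _ := measureReal_le_sqrt_mul_sqrt hB (hT.const_mul c) hint' hint
    _ ≤ √(∫ ω, exp (-(c * Tpulls π t ω)) * B.indicator (fun _ => 1) ω ∂M.P) * 2 := by
        gcongr
        exact Real.sqrt_le_iff.mpr ⟨zero_le_two, by linarith⟩
    _ = _ := mul_comm _ _

/-- Lemma 1, inequality (5.1): for any policy `π`, any `t ≥ 1`, any measurable set `A`
and any `x > 0`,
`P(|θ̂_π(t) − θ| > x, A) ≤ 2 [E exp(−x² T_π(t)/(2σ²)) I{|θ̂_π(t) − θ| > x, A}]^{1/2}`. -/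
theorem lemma1_self_normalized (Ω : Type) [MeasurableSpace Ω] (M : Model Ω) (θ : ℝ)
    (π : ℕ → Ω → ℝ) (hπ : IsPolicy M θ π) (t : ℕ) (ht : 1 ≤ t)
    (A : Set Ω) (hA : MeasurableSet A) (x : ℝ) (hx : 0 < x) :
    (M.P ({ω | x < |thetaHat M θ π t ω - θ|} ∩ A)).toReal ≤
      2 * Real.sqrt (∫ ω, Real.exp (-(x ^ 2) * Tpulls π t ω / (2 * M.σ ^ 2)) *
        Set.indicator ({ω | x < |thetaHat M θ π t ω - θ|} ∩ A) (fun _ => (1 : ℝ)) ω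
        ∂M.P) :=
  lemma1_self_normalized_general Ω M θ π hπ t A hA x hx

end OneArmedBandit
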